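/- Let X be a real n×p matrix, y ∈ ℝⁿ, λ₂ > 0, λ a real with 0 ≤ λ ≤ λ_min(XᵀX), Q_λ = XᵀX − λI, and k an integer with 1 ≤ k ≤ p. Let γ̂ = (XᵀX + λ₂I)⁻¹Xᵀy. Then h(γ̂) = L_ridge(γ̂) + (λ₂ + λ) · min_{S ⊆ {1,…,p}, |S| = p − k} Σ_{j ∈ S} γ̂_j², i.e., the value of h at the ridge minimizer equals the ridge loss at γ̂ plus (λ₂ + λ) times the sum of the p − k smallest squared entries of γ̂. -/

import Mathlib

open Matrix

noncomputable section

theorem XtX_isHermitian {n p : ℕ} (X : Matrix (Fin n) (Fin p) ℝ) :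
    (Xᵀ * X).IsHermitian := by
  simpa using Matrix.isHermitian_conjTranspose_mul_self X

/-- The smallest eigenvalue `λ_min(XᵀX)`. -/
def lamMin {n p : ℕ} (X : Matrix (Fin n) (Fin p) ℝ) : ℝ :=
  ⨅ i, (XtX_isHermitian X).eigenvalues i

/-- `Q_λ = XᵀX − λ I`. -/
def Qmat {n p : ℕ} (X : Matrix (Fin n) (Fin p) ℝ) (lam : ℝ) : Matrix (Fin p) (Fin p) ℝ :=
  Xᵀ * X - lam • (1 : Matrix (Fin p) (Fin p) ℝ)

/-- The ridge loss `L_ridge(β) = βᵀXᵀXβ − 2yᵀXβ + λ₂‖β‖₂²`. -/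
def Lridge {n p : ℕ} (X : Matrix (Fin n) (Fin p) ℝ) (y : Fin n → ℝ) (lam2 : ℝ)
    (β : Fin p → ℝ) : ℝ :=
  β ⬝ᵥ (Xᵀ * X).mulVec β - 2 * (y ⬝ᵥ X.mulVec β) + lam2 * ∑ j, (β j) ^ 2

/-- The feasible region `D_z = {z : 0 ≤ z_j ≤ 1, Σ_j z_j ≤ k}`. -/
def Dz (p k : ℕ) : Set (Fin p → ℝ) :=
  {z | (∀ j, 0 ≤ z j ∧ z j ≤ 1) ∧ ∑ j, z j ≤ (k : ℝ)}

/-- `L_saddle(γ, z) = −γᵀQ_λγ − (1/(λ₂+λ)) (Xᵀy − Q_λγ)ᵀ diag(z) (Xᵀy − Q_λγ)`. -/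
def LSaddle {n p : ℕ} (X : Matrix (Fin n) (Fin p) ℝ) (y : Fin n → ℝ) (lam2 lam : ℝ)
    (γ z : Fin p → ℝ) : ℝ :=
  -(γ ⬝ᵥ (Qmat X lam).mulVec γ)
    - (1 / (lam2 + lam)) *
      ((Xᵀ.mulVec y - (Qmat X lam).mulVec γ) ⬝ᵥ
        (diagonal z).mulVec (Xᵀ.mulVec y - (Qmat X lam).mulVec γ))

/-- The ridge minimizer `γ̂ = (XᵀX + λ₂ I)⁻¹ Xᵀ y`. -/
def ridgeMin {n p : ℕ} (X : Matrix (Fin n) (Fin p) ℝ) (y : Fin n → ℝ) (lam2 : ℝ) :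
    Fin p → ℝ :=
  (Xᵀ * X + lam2 • (1 : Matrix (Fin p) (Fin p) ℝ))⁻¹.mulVec (Xᵀ.mulVec y)

lemma exists_topk {p : ℕ} (a : Fin p → ℝ) (k : ℕ) (hkp : k ≤ p) :
    ∃ T : Finset (Fin p), T.card = k ∧ ∀ i ∈ T, ∀ j, j ∉ T → a j ≤ a i := by
  induction k with
  | zero => exact ⟨∅, rfl, by simp⟩
  | succ k ih =>
    obtain ⟨T, hcard, hT⟩ := ih (Nat.le_of_succ_le hkp)
    have hne : (Tᶜ : Finset (Fin p)).Nonempty := by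
      rw [← Finset.card_pos, Finset.card_compl, hcard]
      simp only [Fintype.card_fin]
      omega
    obtain ⟨i, hiT, hi⟩ := Finset.exists_max_image Tᶜ a hne
    refine ⟨insert i T, ?_, ?_⟩
    · rw [Finset.card_insert_of_notMem (by simpa using hiT), hcard]
    · intro x hx j hj
      rcases Finset.mem_insert.mp hx with rfl | hx
      · exact hi j (Finset.mem_compl.mpr fun h => hj (Finset.mem_insert_of_mem h))
      · exact hT x hx j fun h => hj (Finset.mem_insert_of_mem h)

lemma sum_le_sum_of_card_eq' {p : ℕ} (a : Fin p → ℝ) {A B : Finset (Fin p)}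
    (hcard : A.card = B.card) (hAB : ∀ x ∈ A, ∀ y ∈ B, a x ≤ a y) :
    ∑ x ∈ A, a x ≤ ∑ y ∈ B, a y := by
  rcases A.eq_empty_or_nonempty with rfl | hA
  · have : B = ∅ := Finset.card_eq_zero.mp (by simpa using hcard.symm)
    simp [this]
  · have hB : B.Nonempty := Finset.card_pos.mp (hcard ▸ Finset.card_pos.mpr hA)
    obtain ⟨i₀, hi₀, hmin⟩ := Finset.exists_min_image B a hB
    calc ∑ x ∈ A, a x ≤ ∑ _x ∈ A, a i₀ := Finset.sum_le_sum fun x hx => hAB x hx i₀ hi₀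
      _ = A.card • a i₀ := by rw [Finset.sum_const]
      _ = B.card • a i₀ := by rw [hcard]
      _ = ∑ _y ∈ B, a i₀ := by rw [Finset.sum_const]
      _ ≤ ∑ y ∈ B, a y := Finset.sum_le_sum fun y hy => hmin y hy

/-- The value of `h(γ) = inf_{z ∈ D_z} L_saddle(γ, z)` at the ridge minimizer `γ̂` equals the
ridge loss at `γ̂` plus `(λ₂+λ)` times the sum of the `p − k` smallest squared entries of `γ̂`. -/
theorem stmt4 {n p : ℕ} (X : Matrix (Fin n) (Fin p) ℝ) (y : Fin n → ℝ)
    (lam2 : ℝ) (hlam2 : 0 < lam2)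
    (lam : ℝ) (hlam0 : 0 ≤ lam) (hlam : lam ≤ lamMin X)
    (k : ℕ) (hk1 : 1 ≤ k) (hkp : k ≤ p) :
    (⨅ z ∈ Dz p k, ((LSaddle X y lam2 lam (ridgeMin X y lam2) z : ℝ) : EReal)) =
      ((Lridge X y lam2 (ridgeMin X y lam2)
          + (lam2 + lam) * sInf {r : ℝ | ∃ S : Finset (Fin p),
              S.card = p - k ∧ r = ∑ j ∈ S, (ridgeMin X y lam2 j) ^ 2} : ℝ) : EReal) := by
  set γ := ridgeMin X y lam2 with hγdef
  set a : Fin p → ℝ := fun j => (γ j) ^ 2 with hadef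
  set A := Xᵀ * X + lam2 • (1 : Matrix (Fin p) (Fin p) ℝ) with hAdef
  have hposlam : (0:ℝ) < lam2 + lam := by linarith
  have hne0 : lam2 + lam ≠ 0 := ne_of_gt hposlam
  have hXtX : (Xᵀ * X).PosSemidef := by
    simpa using Matrix.posSemidef_conjTranspose_mul_self X
  have hone : (lam2 • (1 : Matrix (Fin p) (Fin p) ℝ)).PosDef := by
    rw [Matrix.posDef_iff_dotProduct_mulVec]
    constructor
    · simp [Matrix.IsHermitian]
    · intro x hx
      simp only [Matrix.smul_mulVec, Matrix.one_mulVec, dotProduct_smul,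
        smul_eq_mul]
      exact mul_pos hlam2 (Matrix.dotProduct_star_self_pos_iff.mpr hx)
  have hA : A.PosDef := Matrix.PosDef.posSemidef_add hXtX hone
  have hAdet : IsUnit A.det := A.isUnit_iff_isUnit_det.mp hA.isUnit
  have hAγ : A.mulVec γ = Xᵀ.mulVec y := by
    rw [hγdef, ridgeMin, ← hAdef, Matrix.mulVec_mulVec, Matrix.mul_nonsing_inv A hAdet,
      Matrix.one_mulVec]
  have hQ : Qmat X lam = A - (lam2 + lam) • (1 : Matrix (Fin p) (Fin p) ℝ) := by
    rw [Qmat, hAdef]; module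
  have hw : Xᵀ.mulVec y - (Qmat X lam).mulVec γ = (lam2 + lam) • γ := by
    rw [hQ, Matrix.sub_mulVec, hAγ, Matrix.smul_mulVec, Matrix.one_mulVec]
    abel
  -- simplification of LSaddle at γ
  have hL : ∀ z : Fin p → ℝ, LSaddle X y lam2 lam γ z
      = -(γ ⬝ᵥ (Qmat X lam).mulVec γ) - (lam2 + lam) * ∑ j, z j * a j := by
    intro z
    rw [LSaddle, hw]
    congr 1
    have hdot : ((lam2 + lam) • γ) ⬝ᵥ (diagonal z).mulVec ((lam2 + lam) • γ)
        = (lam2 + lam) ^ 2 * ∑ j, z j * a j := by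
      simp only [dotProduct, Matrix.mulVec_diagonal, Pi.smul_apply, smul_eq_mul,
        Finset.mul_sum, hadef]
      exact Finset.sum_congr rfl fun j _ => by ring
    rw [hdot]
    field_simp
  -- top-k set
  obtain ⟨T, hTcard, hTmax⟩ := exists_topk a k hkp
  set M := ∑ j ∈ T, a j with hMdef
  set m := ∑ j ∈ Tᶜ, a j with hmdef
  have hMm : M + m = ∑ j, a j := Finset.sum_add_sum_compl T a
  -- sInf equals m
  have hsInf : sInf {r : ℝ | ∃ S : Finset (Fin p),
      S.card = p - k ∧ r = ∑ j ∈ S, (γ j) ^ 2} = m := by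
    apply IsLeast.csInf_eq
    constructor
    · exact ⟨Tᶜ, by rw [Finset.card_compl, hTcard, Fintype.card_fin], rfl⟩
    · rintro r ⟨S, hS, rfl⟩
      show m ≤ ∑ j ∈ S, a j
      have hcards : (Tᶜ : Finset (Fin p)).card = S.card := by
        rw [Finset.card_compl, hTcard, Fintype.card_fin, hS]
      have h1 : ∑ j ∈ Tᶜ ∩ S, a j + ∑ j ∈ Tᶜ \ S, a j = ∑ j ∈ Tᶜ, a j :=
        Finset.sum_inter_add_sum_sdiff Tᶜ S a
      have h2 : ∑ j ∈ S ∩ Tᶜ, a j + ∑ j ∈ S \ Tᶜ, a j = ∑ j ∈ S, a j :=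
        Finset.sum_inter_add_sum_sdiff S Tᶜ a
      have hsub : ∑ j ∈ Tᶜ \ S, a j ≤ ∑ j ∈ S \ Tᶜ, a j := by
        apply sum_le_sum_of_card_eq' a (Finset.card_sdiff_comm hcards)
        intro x hx y hy
        have hxT : x ∉ T := Finset.mem_compl.mp (Finset.mem_sdiff.mp hx).1
        have hyT : y ∈ T := by
          have := (Finset.mem_sdiff.mp hy).2
          simpa using this
        exact hTmax y hyT x hxT
      have hic : ∑ j ∈ Tᶜ ∩ S, a j = ∑ j ∈ S ∩ Tᶜ, a j := by rw [Finset.inter_comm]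
      rw [hmdef]
      linarith
  -- sum bound on Dz
  have hTne : T.Nonempty := Finset.card_pos.mp (by omega)
  obtain ⟨i₀, hi₀, hminT⟩ := Finset.exists_min_image T a hTne
  have ht0 : 0 ≤ a i₀ := sq_nonneg _
  have hzsum : ∀ z ∈ Dz p k, ∑ j, z j * a j ≤ M := by
    intro z hz
    obtain ⟨hz01, hzk⟩ := hz
    have hsplitza : ∑ j ∈ T, (z j * a j) + ∑ j ∈ Tᶜ, (z j * a j) = ∑ j, z j * a j :=
      Finset.sum_add_sum_compl T _
    have hsplitz : ∑ j ∈ T, z j + ∑ j ∈ Tᶜ, z j = ∑ j, z j :=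
      Finset.sum_add_sum_compl T _
    have h1 : ∑ j ∈ Tᶜ, z j * a j ≤ ∑ j ∈ Tᶜ, z j * a i₀ :=
      Finset.sum_le_sum fun j hj =>
        mul_le_mul_of_nonneg_left (hTmax i₀ hi₀ j (Finset.mem_compl.mp hj)) (hz01 j).1
    have h2 : ∑ j ∈ T, (1 - z j) * a i₀ ≤ ∑ j ∈ T, (1 - z j) * a j :=
      Finset.sum_le_sum fun j hj =>
        mul_le_mul_of_nonneg_left (hminT j hj) (by linarith [(hz01 j).2])
    have e1 : ∑ j ∈ Tᶜ, z j * a i₀ = (∑ j ∈ Tᶜ, z j) * a i₀ := by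
      rw [Finset.sum_mul]
    have e2 : ∑ j ∈ T, (1 - z j) * a i₀ = ((k : ℝ) - ∑ j ∈ T, z j) * a i₀ := by
      rw [← Finset.sum_mul, Finset.sum_sub_distrib, Finset.sum_const, hTcard]
      norm_num
    have e3 : ∑ j ∈ T, (1 - z j) * a j = M - ∑ j ∈ T, z j * a j := by
      rw [hMdef, ← Finset.sum_sub_distrib]
      exact Finset.sum_congr rfl fun j _ => by ring
    nlinarith [hzk, ht0]
  -- the candidate z₀
  set z₀ : Fin p → ℝ := fun j => if j ∈ T then 1 else 0 with hz₀def
  have hz₀mem : z₀ ∈ Dz p k := by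
    constructor
    · intro j; by_cases h : j ∈ T <;> simp [hz₀def, h]
    · have : ∑ j, z₀ j = (T.card : ℝ) := by
        simp [hz₀def, Finset.sum_ite_mem]
      rw [this, hTcard]
  have hz₀val : ∑ j, z₀ j * a j = M := by
    rw [hMdef]
    simp [hz₀def, ite_mul, Finset.sum_ite_mem]
  -- key real identity
  have hγγ : γ ⬝ᵥ γ = ∑ j, (γ j) ^ 2 := by
    simp [dotProduct, sq]
  have hyX : y ⬝ᵥ X.mulVec γ = γ ⬝ᵥ (Xᵀ * X).mulVec γ + lam2 * ∑ j, (γ j) ^ 2 := by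
    have h1 : y ⬝ᵥ X.mulVec γ = (Xᵀ.mulVec y) ⬝ᵥ γ := by
      rw [Matrix.mulVec_transpose, Matrix.dotProduct_mulVec]
    rw [h1, ← hAγ, hAdef, Matrix.add_mulVec, Matrix.smul_mulVec, Matrix.one_mulVec,
      add_dotProduct, smul_dotProduct, dotProduct_comm, hγγ]
    simp [smul_eq_mul]
  have hQγ : γ ⬝ᵥ (Qmat X lam).mulVec γ = γ ⬝ᵥ (Xᵀ * X).mulVec γ - lam * ∑ j, (γ j) ^ 2 := by
    rw [Qmat, Matrix.sub_mulVec, dotProduct_sub, Matrix.smul_mulVec,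
      Matrix.one_mulVec, dotProduct_smul, hγγ]
    simp [smul_eq_mul]
  have hMm2 : ∑ j, (γ j) ^ 2 = M + m := by
    have h0 : ∑ j, (γ j) ^ 2 = ∑ j, a j := rfl
    rw [h0, ← hMm]
  have hkey : -(γ ⬝ᵥ (Qmat X lam).mulVec γ) - (lam2 + lam) * M
      = Lridge X y lam2 γ + (lam2 + lam) * m := by
    rw [Lridge, hyX, hQγ, hMm2]
    ring
  rw [hsInf, ← hkey]
  apply le_antisymm
  · refine le_trans (iInf₂_le z₀ hz₀mem) ?_
    rw [hL z₀, hz₀val]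
  · apply le_iInf₂
    intro z hz
    rw [hL z]
    apply EReal.coe_le_coe_iff.mpr
    have h := mul_le_mul_of_nonneg_left (hzsum z hz) (le_of_lt hposlam)
    linarith
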